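/- Define F : ℂ² → ℂ by F(x,y) := x + y − 2·√(|xy|). Then: (i) for every real t > 0, sSup{γ ≥ 0 : ∃ r > 0 with ∫_{B(√t, r)} |x + t/x − 2√t|^{−2γ} dλ(x) < ∞} = 1/2; and (ii) sSup{γ ≥ 0 : ∃ r > 0 with ∫_{B(0,r)} |x|^{−2γ} dλ(x) < ∞} = 1. In particular, the complex singularity exponent of f₀ = F|_{X₀} at (0,0) equals 1, while the complex singularity exponent of f_t = F|_{X_t} at (√t, √t) equals 1/2 for every t > 0, so 1 = c_{(0,0)}(f₀) > liminf_{t→0⁺} c_{(√t,√t)}(f_t) = 1/2. -/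

import Mathlib

/-!
Near `√t` the fibre restriction factors as `x + t/x - 2√t = (x - √t)² / x`, and `1/x` stays
bounded above and below there, so `|f_t|` is comparable to `|x - √t|²`. Comparable functions
have the same integrable exponents, and by polar coordinates in `ℂ ≅ ℝ²` the function
`|x - p|^(-2nγ)` is integrable near `p` iff `2nγ < 2`. This gives `1/2` for `f_t` (`n = 2`) and
`1` for `x ↦ x` (`n = 1`).
-/

open MeasureTheory Set Metric Filter Topology Asymptotics
open scoped ENNReal

def integrableExponents {α F : Type*} [PseudoMetricSpace α] [MeasurableSpace α] [Norm F]
    (μ : Measure α) (f : α → F) (p : α) : Set ℝ :=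
  {γ : ℝ | 0 ≤ γ ∧ ∃ r : ℝ, 0 < r ∧
    (∫⁻ x in ball p r, ENNReal.ofReal (‖f x‖ ^ (-(2 * γ))) ∂μ) < ⊤}

noncomputable def complexSingularityExponent {α F : Type*} [PseudoMetricSpace α]
    [MeasurableSpace α] [Norm F] (μ : Measure α) (f : α → F) (p : α) : ℝ :=
  sSup (integrableExponents μ f p)

/-- `0 ^ (-s)` is `0` for `s > 0`, which is why zeros of `a` must be zeros of `b`. -/
theorem rpow_neg_le_mul_rpow_neg_of_le_mul {a b c s : ℝ} (ha : 0 ≤ a) (hc : 0 < c)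
    (hs : 0 ≤ s) (hab : a ≤ c * b) (h0 : a = 0 → b = 0) : b ^ (-s) ≤ c ^ s * a ^ (-s) := by
  rcases ha.eq_or_lt with rfl | ha
  · rw [h0 rfl]
    rcases hs.eq_or_lt with rfl | hs
    · simp
    · simp [Real.zero_rpow (neg_ne_zero.2 hs.ne')]
  have hb : 0 < b := (mul_pos_iff_of_pos_left hc).1 (ha.trans_le hab)
  calc b ^ (-s) ≤ (a / c) ^ (-s) :=
        Real.rpow_le_rpow_of_nonpos (div_pos ha hc)
          (div_le_of_le_mul₀ hc.le hb.le (by rwa [mul_comm])) (neg_nonpos.2 hs)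
    _ = c ^ s * a ^ (-s) := by
      rw [Real.div_rpow ha.le hc.le, Real.rpow_neg hc.le, div_inv_eq_mul, mul_comm]

section Comparison

variable {α F G : Type*} [PseudoMetricSpace α] [MeasurableSpace α] [OpensMeasurableSpace α]
  [NormedAddCommGroup F] [NormedAddCommGroup G] {μ : Measure α} {f : α → F} {g : α → G}
  {p : α}

theorem Asymptotics.IsTheta.integrableExponents_subset (h : f =Θ[𝓝 p] g) :
    integrableExponents μ g p ⊆ integrableExponents μ f p := by
  rintro γ ⟨hγ, r, hr, hfin⟩
  obtain ⟨c, hc, hgf⟩ := h.2.exists_pos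
  have hnear : ∀ᶠ x in 𝓝 p, ‖g x‖ ≤ c * ‖f x‖ ∧ (g x = 0 → f x = 0) :=
    hgf.bound.and (h.eq_zero_iff.mono fun x hx => hx.2)
  obtain ⟨ρ, hρ, hball⟩ := Metric.eventually_nhds_iff_ball.1 hnear
  refine ⟨hγ, min r ρ, lt_min hr hρ, ?_⟩
  calc ∫⁻ x in ball p (min r ρ), ENNReal.ofReal (‖f x‖ ^ (-(2 * γ))) ∂μ
      ≤ ∫⁻ x in ball p (min r ρ),
          ENNReal.ofReal (c ^ (2 * γ)) * ENNReal.ofReal (‖g x‖ ^ (-(2 * γ))) ∂μ := by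
        refine setLIntegral_mono' measurableSet_ball fun x hx => ?_
        obtain ⟨hle, hzero⟩ := hball x (ball_subset_ball (min_le_right r ρ) hx)
        rw [← ENNReal.ofReal_mul (by positivity)]
        exact ENNReal.ofReal_le_ofReal <| rpow_neg_le_mul_rpow_neg_of_le_mul (norm_nonneg _) hc
          (by positivity) hle fun hg => norm_eq_zero.2 (hzero (norm_eq_zero.1 hg))
    _ ≤ ENNReal.ofReal (c ^ (2 * γ)) *
          ∫⁻ x in ball p r, ENNReal.ofReal (‖g x‖ ^ (-(2 * γ))) ∂μ := by
        rw [lintegral_const_mul' _ _ ENNReal.ofReal_ne_top]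
        gcongr
        exact min_le_left r ρ
    _ < ⊤ := ENNReal.mul_lt_top ENNReal.ofReal_lt_top hfin

theorem Asymptotics.IsTheta.integrableExponents_eq (h : f =Θ[𝓝 p] g) :
    integrableExponents μ f p = integrableExponents μ g p :=
  h.symm.integrableExponents_subset.antisymm h.integrableExponents_subset

theorem Asymptotics.IsTheta.complexSingularityExponent_eq (h : f =Θ[𝓝 p] g) :
    complexSingularityExponent μ f p = complexSingularityExponent μ g p :=
  congrArg sSup h.integrableExponents_eq

end Comparison

section Haar

variable {E : Type*} [NormedAddCommGroup E] [NormedSpace ℝ E] [FiniteDimensional ℝ E]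
  [MeasurableSpace E] [BorelSpace E] [Nontrivial E] (μ : Measure E) [μ.IsAddHaarMeasure]

theorem lintegral_ball_zero_norm_rpow_neg_lt_top_iff {r : ℝ} (hr : 0 < r) (s : ℝ) :
    ∫⁻ x in ball (0 : E) r, ENNReal.ofReal (‖x‖ ^ (-s)) ∂μ < ∞ ↔
      s < Module.finrank ℝ E := by
  have hd : 1 ≤ Module.finrank ℝ E := Module.finrank_pos
  rw [lt_top_iff_ne_top, lintegral_ofReal_ne_top_iff_integrable
      (measurable_norm.pow_const _).aestronglyMeasurable
      (ae_of_all _ fun x => by positivity), ← IntegrableOn,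
    integrableOn_fun_norm_addHaar μ (f := fun y => y ^ (-s)),
    integrableOn_congr_fun (g := fun y : ℝ => y ^ ((Module.finrank ℝ E : ℝ) - 1 - s))
      (fun y hy => ?_) measurableSet_Ioo,
    intervalIntegral.integrableOn_Ioo_rpow_iff hr]
  · constructor <;> intro h <;> linarith
  · rw [smul_eq_mul, ← Real.rpow_natCast, ← Real.rpow_add hy.1, Nat.cast_sub hd, Nat.cast_one,
      sub_eq_add_neg _ s]

theorem lintegral_ball_norm_sub_rpow_neg_lt_top_iff (p : E) {r : ℝ} (hr : 0 < r) (s : ℝ) :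
    ∫⁻ x in ball p r, ENNReal.ofReal (‖x - p‖ ^ (-s)) ∂μ < ∞ ↔
      s < Module.finrank ℝ E := by
  rw [← lintegral_ball_zero_norm_rpow_neg_lt_top_iff μ hr s,
    ← lintegral_indicator measurableSet_ball, ← lintegral_indicator measurableSet_ball,
    ← lintegral_sub_right_eq_self
      (fun x => (ball (0 : E) r).indicator (fun x => ENNReal.ofReal (‖x‖ ^ (-s))) x) p]
  simp only [indicator, mem_ball_iff_norm, sub_zero]

end Haar

theorem integrableExponents_sub_pow (p : ℂ) {n : ℕ} (hn : 0 < n) :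
    integrableExponents volume (fun x : ℂ => (x - p) ^ n) p = Ico (0 : ℝ) (1 / n) := by
  have hpow (γ : ℝ) (x : ℂ) :
      ‖(x - p) ^ n‖ ^ (-(2 * γ)) = ‖x - p‖ ^ (-(2 * n * γ)) := by
    rw [norm_pow, ← Real.rpow_natCast, ← Real.rpow_mul (norm_nonneg _)]
    ring_nf
  have hfin (γ : ℝ) {r : ℝ} (hr : 0 < r) :
      ∫⁻ x in ball p r, ENNReal.ofReal (‖(x - p) ^ n‖ ^ (-(2 * γ))) < ∞ ↔
        γ < 1 / n := by
    simp_rw [hpow, lintegral_ball_norm_sub_rpow_neg_lt_top_iff volume p hr,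
      Complex.finrank_real_complex, lt_div_iff₀ (Nat.cast_pos.2 hn : (0 : ℝ) < n)]
    push_cast
    constructor <;> intro h <;> linarith
  ext γ
  refine ⟨fun ⟨hγ, r, hr, h⟩ => ⟨hγ, (hfin γ hr).1 h⟩,
    fun ⟨hγ, h⟩ => ⟨hγ, 1, one_pos, (hfin γ one_pos).2 h⟩⟩

theorem complexSingularityExponent_sub_pow (p : ℂ) {n : ℕ} (hn : 0 < n) :
    complexSingularityExponent volume (fun x : ℂ => (x - p) ^ n) p = 1 / n := by
  rw [complexSingularityExponent, integrableExponents_sub_pow p hn, csSup_Ico (by positivity)]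

theorem isTheta_add_sq_div_sub_two_mul {𝕜 : Type*} [NormedField 𝕜] {a : 𝕜} (ha : a ≠ 0) :
    (fun x => x + a ^ 2 / x - 2 * a) =Θ[𝓝 a] fun x => (x - a) ^ 2 := by
  have hinv : (fun x : 𝕜 => x⁻¹) =Θ[𝓝 a] fun _ => (1 : 𝕜) :=
    (isTheta_of_div_tendsto_nhds_ne_zero (c := a⁻¹) (by simpa using tendsto_inv₀ ha)
      (inv_ne_zero ha)).symm
  have hfactor : (fun x => x + a ^ 2 / x - 2 * a) =ᶠ[𝓝 a] fun x => (x - a) ^ 2 * x⁻¹ := by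
    filter_upwards [eventually_ne_nhds ha] with x hx
    field_simp
    ring
  refine hfactor.trans_isTheta ?_
  simpa only [mul_one] using (isTheta_refl (fun x => (x - a) ^ 2) _).mul hinv

/-- For the non-holomorphic family `F(x,y) = x + y - 2√(|xy|)` along
`π(x,y) = xy`: (i) for every `t > 0`, the complex singularity exponent at
`x = √t` of the fiber restriction `f_t(x) = x + t/x - 2√t` equals `1/2`, while
(ii) the complex singularity exponent of `F(x,0) = x` at `x = 0` equals `1`.
Hence lower semi-continuity of complex singularity exponents fails:
`1 = c_{(0,0)}(f₀) > liminf_{t→0⁺} c_{(√t,√t)}(f_t) = 1/2`. -/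
theorem cse_counterexample_sqrt :
    (∀ t : ℝ, 0 < t →
      sSup {γ : ℝ | 0 ≤ γ ∧ ∃ r : ℝ, 0 < r ∧
        (∫⁻ x in Metric.ball ((Real.sqrt t : ℝ) : ℂ) r,
          ENNReal.ofReal (‖x + (t : ℂ) / x - 2 * ((Real.sqrt t : ℝ) : ℂ)‖ ^ (-(2 * γ)))) < ⊤}
        = 1 / 2) ∧
    sSup {γ : ℝ | 0 ≤ γ ∧ ∃ r : ℝ, 0 < r ∧
        (∫⁻ x in Metric.ball (0 : ℂ) r, ENNReal.ofReal (‖x‖ ^ (-(2 * γ)))) < ⊤} = 1 := by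
  refine ⟨fun t ht => ?_, ?_⟩
  · set a : ℂ := ((Real.sqrt t : ℝ) : ℂ)
    have ha : a ≠ 0 := Complex.ofReal_ne_zero.2 (Real.sqrt_pos.2 ht).ne'
    have hta : (t : ℂ) = a ^ 2 := by rw [← Complex.ofReal_pow, Real.sq_sqrt ht.le]
    change complexSingularityExponent volume (fun x => x + (t : ℂ) / x - 2 * a) a = 1 / 2
    rw [hta, (isTheta_add_sq_div_sub_two_mul ha).complexSingularityExponent_eq,
      complexSingularityExponent_sub_pow a two_pos]
    norm_num
  · change complexSingularityExponent volume (fun x : ℂ => x) 0 = 1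
    simpa using complexSingularityExponent_sub_pow (0 : ℂ) one_pos
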